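/- arXiv:math/0609818 — 3 statements merged into one kernel-verified Lean document; each statement's English description precedes it below -/
import Mathlib

section
/- Let S be the evolution semispray of a Lagrangian mechanical system, satisfying i_S ω_L = −dE_L + σ with ω_L the symplectic Cartan 2-form. Then S(E_L) = σ(S) = σ_i y^i. Consequently, along any integral curve of S the energy satisfies d/dt (E_L) = σ_i(x, dx/dt) · dx^i/dt, and the energy is non-increasing along evolution curves if and only if σ_i y^i ≤ 0 everywhere (i.e. the external force field is dissipative). -/
/-!
Skew-symmetry of `ω_L` makes `ω_L(S, S) = 0`, so evaluating `i_S ω_L = -dE_L + σ` on `S` itself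
gives `dE_L(S) = σ(S)`, and `σ(S) = σ_i y^i` because `S` is a semispray. By the chain rule this is
the rate of change of the energy along every evolution curve, so dissipativity makes the energy
non-increasing by the mean value theorem. Conversely, the field `S` is only continuous, but Peano's
theorem still provides an evolution curve through every point with `y ≠ 0`; there the energy
derivative `σ_i y^i` of a non-increasing energy is `≤ 0`. Peano's theorem is proved by solving
the ODEs of uniformly bounded Lipschitz approximations of the field with Picard–Lindelöf and
extracting a uniformly convergent subsequence of solutions with Arzelà–Ascoli.
-/

/-- The phase space `TM` in local coordinates: points `(x, y)`. -/
abbrev TP (n : ℕ) := (Fin n → ℝ) × (Fin n → ℝ)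

/-- Partial derivative with respect to the base coordinate `x^i`. -/
noncomputable def pdx {n : ℕ} (i : Fin n) (f : TP n → ℝ) : TP n → ℝ :=
  fun p => fderiv ℝ f p (Pi.single i 1, 0)

/-- Partial derivative with respect to the fibre coordinate `y^i`. -/
noncomputable def pdy {n : ℕ} (i : Fin n) (f : TP n → ℝ) : TP n → ℝ :=
  fun p => fderiv ℝ f p (0, Pi.single i 1)

/-- The metric tensor `g_{ij} = (1/2) ∂²L/∂y^i∂y^j` of a Lagrangian. -/
noncomputable def metricT {n : ℕ} (L : TP n → ℝ) (p : TP n) (i j : Fin n) : ℝ :=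
  (1/2) * pdy i (pdy j L) p

/-- The Cartan 2-form `ω_L` of `L` evaluated at `p` on two tangent vectors. -/
noncomputable def cartanForm {n : ℕ} (L : TP n → ℝ) (p w₁ w₂ : TP n) : ℝ :=
  (∑ i, ∑ j, 2 * metricT L p i j * (w₁.2 j * w₂.1 i - w₂.2 j * w₁.1 i)) +
  ∑ i, ∑ j, (1/2) * (pdy i (pdx j L) p - pdx i (pdy j L) p) *
      (w₁.1 j * w₂.1 i - w₂.1 j * w₁.1 i)

/-- The energy `E_L = y^i ∂L/∂y^i − L` of a Lagrangian. -/
noncomputable def energy {n : ℕ} (L : TP n → ℝ) : TP n → ℝ :=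
  fun p => (∑ i, p.2 i * pdy i L p) - L p

/-- The force 1-form components `σ_i = g_{ij} V^j`. -/
noncomputable def forceForm {n : ℕ} (L : TP n → ℝ) (V : TP n → Fin n → ℝ) :
    TP n → Fin n → ℝ :=
  fun p i => ∑ j, metricT L p i j * V p j

/-- The lift of a curve `t ↦ x(t)` in `M` to the curve `t ↦ (x(t), dx/dt(t))` in `TM`. -/
noncomputable def velCurve {n : ℕ} (c : ℝ → Fin n → ℝ) : ℝ → TP n :=
  fun t => (c t, fun i => deriv (fun s => c s i) t)

open Set Metric Filter Topology BoundedContinuousFunction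
open scoped NNReal

section LipschitzApproximation

variable {α : Type*} [PseudoMetricSpace α]

theorem bddBelow_range_add_mul_dist {K : Set α} {u : α → ℝ} {m : ℝ} (hm : ∀ x ∈ K, m ≤ u x)
    (L : ℝ≥0) (y : α) : BddBelow (range fun x : K => u x + L * dist y x) :=
  ⟨m, by rintro _ ⟨x, rfl⟩; exact le_add_of_le_of_nonneg (hm x x.2) (by positivity)⟩

theorem lipschitzWith_iInf_add_mul_dist {K : Set α} [Nonempty K] {u : α → ℝ} {m : ℝ}
    (hm : ∀ x ∈ K, m ≤ u x) (L : ℝ≥0) :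
    LipschitzWith L fun y : α => ⨅ x : K, u x + L * dist y x := by
  refine LipschitzWith.of_le_add_mul L fun y y' => ?_
  rw [← sub_le_iff_le_add]
  refine le_ciInf fun x => sub_le_iff_le_add.2 ?_
  calc ⨅ x : K, u x + L * dist y x ≤ u x + L * dist y x :=
        ciInf_le (bddBelow_range_add_mul_dist hm L y) x
    _ ≤ u x + L * dist y' x + L * dist y y' := by
        have := dist_triangle y y' x
        nlinarith [L.2]

theorem exists_lipschitzWith_abs_sub_le {K : Set α} (hK : IsCompact K) {u : α → ℝ}
    (hu : ContinuousOn u K) {B : ℝ} (hB₀ : 0 ≤ B) (hB : ∀ x ∈ K, |u x| ≤ B) {ε : ℝ} (hε : 0 < ε) :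
    ∃ (C : ℝ≥0) (g : α → ℝ), LipschitzWith C g ∧ (∀ x, |g x| ≤ B) ∧ ∀ x ∈ K, |g x - u x| ≤ ε := by
  rcases K.eq_empty_or_nonempty with rfl | hne
  · exact ⟨0, fun _ => 0, LipschitzWith.const 0, fun _ => by simpa using hB₀, by simp⟩
  have : Nonempty K := hne.to_subtype
  obtain ⟨δ, hδ, hclose⟩ := Metric.uniformContinuousOn_iff.1
    (hK.uniformContinuousOn_of_continuous hu) ε hε
  have hlow : ∀ x ∈ K, -B ≤ u x := fun x hx => (abs_le.1 (hB x hx)).1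
  -- beyond distance `δ` the penalty `L * dist y x` exceeds the oscillation `2 * B` of `u` on `K`
  set L : ℝ≥0 := ⟨2 * B / δ, by positivity⟩
  set g₀ : α → ℝ := fun y => ⨅ x : K, u x + L * dist y x
  have hg₀_low : ∀ y, -B ≤ g₀ y := fun y =>
    le_ciInf fun x => le_add_of_le_of_nonneg (hlow x x.2) (by positivity)
  have hg₀_le : ∀ y ∈ K, g₀ y ≤ u y := fun y hy => by
    simpa using ciInf_le (bddBelow_range_add_mul_dist hlow L y) ⟨y, hy⟩
  have hg₀_ge : ∀ y ∈ K, u y - ε ≤ g₀ y := fun y hy => le_ciInf fun x => by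
    rcases lt_or_ge (dist y x) δ with hyx | hyx
    · have := (abs_lt.1 (Real.dist_eq _ _ ▸ hclose y hy x x.2 hyx)).2
      nlinarith [dist_nonneg (x := y) (y := (x : α)), L.2]
    · have hLδ : (L : ℝ) * δ = 2 * B := div_mul_cancel₀ _ hδ.ne'
      have := (abs_le.1 (hB y hy)).2
      nlinarith [hlow x x.2, L.2]
  refine ⟨L, fun y => min (g₀ y) B, (lipschitzWith_iInf_add_mul_dist hlow L).min_const B,
    fun y => abs_le.2 ⟨le_min (hg₀_low y) (by linarith), min_le_right _ _⟩, fun y hy => ?_⟩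
  show |min (g₀ y) B - u y| ≤ ε
  rw [min_eq_left ((hg₀_le y hy).trans (abs_le.1 (hB y hy)).2)]
  exact abs_le.2 ⟨by linarith [hg₀_ge y hy], by linarith [hg₀_le y hy]⟩

theorem LipschitzWith.pi {ι : Type*} [Fintype ι] {g : ι → α → ℝ} {C : ι → ℝ≥0}
    (hg : ∀ i, LipschitzWith (C i) (g i)) :
    LipschitzWith (Finset.univ.sup C) fun x i => g i x :=
  LipschitzWith.of_dist_le_mul fun x y => (dist_pi_le_iff (by positivity)).2 fun i =>
    ((hg i).dist_le_mul x y).trans <| by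
      gcongr; exact_mod_cast Finset.le_sup (f := C) (Finset.mem_univ i)

variable {E : Type*} [NormedAddCommGroup E] [NormedSpace ℝ E] [FiniteDimensional ℝ E]

theorem exists_lipschitzWith_norm_sub_le {K : Set α} (hK : IsCompact K) {f : α → E}
    (hf : ContinuousOn f K) :
    ∃ M : ℝ≥0, ∀ ε > 0, ∃ (C : ℝ≥0) (g : α → E),
      LipschitzWith C g ∧ (∀ x, ‖g x‖ ≤ M) ∧ ∀ x ∈ K, ‖g x - f x‖ ≤ ε := by
  -- approximate the coordinates of `f` in a basis
  set e := (Module.finBasis ℝ E).equivFunL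
  obtain ⟨B, hB⟩ := hK.exists_bound_of_continuousOn (e.continuous.comp_continuousOn hf)
  have hB' : ∀ x ∈ K, ‖e (f x)‖ ≤ max B 0 := fun x hx => (hB x hx).trans (le_max_left _ _)
  set T : (Fin (Module.finrank ℝ E) → ℝ) →L[ℝ] E := e.symm.toContinuousLinearMap
  refine ⟨‖T‖₊ * (max B 0).toNNReal, fun ε hε => ?_⟩
  set ε' := ε / (‖T‖ + 1)
  have hcoord : ∀ i, ∃ (C : ℝ≥0) (g : α → ℝ), LipschitzWith C g ∧ (∀ x, |g x| ≤ max B 0) ∧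
      ∀ x ∈ K, |g x - e (f x) i| ≤ ε' := fun i =>
    exists_lipschitzWith_abs_sub_le hK ((continuous_apply i).comp_continuousOn
      (e.continuous.comp_continuousOn hf)) (le_max_right _ _)
      (fun x hx => (norm_le_pi_norm (e (f x)) i).trans (hB' x hx)) (by positivity)
  choose C g hgC hgB hgf using hcoord
  refine ⟨_, fun x => T fun i => g i x, T.lipschitz.comp (LipschitzWith.pi hgC),
    fun x => ?_, fun x hx => ?_⟩
  · calc ‖T fun i => g i x‖ ≤ ‖T‖ * ‖fun i => g i x‖ := T.le_opNorm _
      _ ≤ ‖T‖ * max B 0 := by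
          gcongr
          exact (pi_norm_le_iff_of_nonneg (le_max_right _ _)).2 fun i => hgB i x
      _ = _ := by simp [Real.coe_toNNReal _ (le_max_right B 0)]
  · have : (T fun i => g i x) - f x = T ((fun i => g i x) - e (f x)) := by
      simp [T, map_sub]
    calc ‖(T fun i => g i x) - f x‖ ≤ ‖T‖ * ‖(fun i => g i x) - e (f x)‖ := this ▸ T.le_opNorm _
      _ ≤ ‖T‖ * ε' := by
          gcongr
          exact (pi_norm_le_iff_of_nonneg (by positivity)).2 fun i => hgf i x hx
      _ ≤ ε := by
          rw [mul_div_assoc', div_le_iff₀ (by positivity)]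
          nlinarith

theorem exists_lipschitzWith_tendstoUniformlyOn {K : Set α} (hK : IsCompact K) {f : α → E}
    (hf : ContinuousOn f K) :
    ∃ (M : ℝ≥0) (g : ℕ → α → E), (∀ k, ∃ C, LipschitzWith C (g k)) ∧ (∀ k x, ‖g k x‖ ≤ M) ∧
      TendstoUniformlyOn g f atTop K := by
  obtain ⟨M, hM⟩ := exists_lipschitzWith_norm_sub_le hK hf
  choose C g hgC hgM hgf using fun k : ℕ => hM (1 / (k + 1)) (by positivity)
  refine ⟨M, g, fun k => ⟨C k, hgC k⟩, hgM, Metric.tendstoUniformlyOn_iff.2 fun ε hε => ?_⟩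
  obtain ⟨N, hN⟩ := exists_nat_one_div_lt hε
  filter_upwards [eventually_ge_atTop N] with k hk x hx
  rw [dist_comm, dist_eq_norm]
  calc ‖g k x - f x‖ ≤ 1 / (k + 1) := hgf k x hx
    _ ≤ 1 / (N + 1) := by gcongr
    _ < ε := hN

end LipschitzApproximation

section Peano

theorem TendstoUniformlyOn.comp_of_uniformContinuousOn {ι X β γ : Type*} [PseudoMetricSpace β]
    [PseudoMetricSpace γ] {l : Filter ι} {K : Set β} {f : β → γ} (hf : UniformContinuousOn f K)
    {g : ι → β → γ} (hg : TendstoUniformlyOn g f l K) {s : Set X} {u : ι → X → β} {v : X → β}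
    (hu : TendstoUniformlyOn u v l s) (huK : ∀ k, MapsTo (u k) s K) (hvK : MapsTo v s K) :
    TendstoUniformlyOn (fun k x => g k (u k x)) (fun x => f (v x)) l s := by
  refine Metric.tendstoUniformlyOn_iff.2 fun ε hε => ?_
  obtain ⟨δ, hδ, hfδ⟩ := Metric.uniformContinuousOn_iff.1 hf (ε / 2) (half_pos hε)
  filter_upwards [Metric.tendstoUniformlyOn_iff.1 hu δ hδ,
    Metric.tendstoUniformlyOn_iff.1 hg (ε / 2) (half_pos hε)] with k huk hgk x hx
  calc dist (f (v x)) (g k (u k x)) ≤ dist (f (v x)) (f (u k x)) + dist (f (u k x)) (g k (u k x)) :=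
        dist_triangle _ _ _
    _ < ε / 2 + ε / 2 := add_lt_add (hfδ _ (hvK hx) _ (huK k hx) (huk x hx)) (hgk _ (huK k hx))
    _ = ε := add_halves ε

theorem exists_subseq_tendstoUniformlyOn_Icc {β : Type*} [MetricSpace β] {K : Set β}
    (hK : IsCompact K) {a b : ℝ} (hab : a ≤ b) {M : ℝ≥0} {u : ℕ → ℝ → β}
    (hu : ∀ k, LipschitzOnWith M (u k) (Icc a b)) (huK : ∀ k, MapsTo (u k) (Icc a b) K) :
    ∃ (v : ℝ → β) (φ : ℕ → ℕ), StrictMono φ ∧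
      TendstoUniformlyOn (fun k => u (φ k)) v atTop (Icc a b) := by
  have : CompactSpace (Icc a b) := isCompact_iff_compactSpace.1 isCompact_Icc
  let U : ℕ → Icc a b →ᵇ β := fun k =>
    .mkOfCompact ⟨(Icc a b).domRestrict (u k), (hu k).continuousOn.domRestrict⟩
  have hcompact : IsCompact (closure (range U)) := by
    refine arzela_ascoli K hK _ (by rintro _ x ⟨k, rfl⟩; exact huK k x.2) ?_
    refine (LipschitzWith.uniformEquicontinuous _ M ?_).equicontinuous
    rintro ⟨_, k, rfl⟩
    exact (hu k).to_restrict
  obtain ⟨V, -, φ, hφ, hUV⟩ := hcompact.tendsto_subseq fun k => subset_closure (mem_range_self k)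
  refine ⟨IccExtend hab V, φ, hφ, ?_⟩
  rw [tendstoUniformlyOn_iff_tendstoUniformly_comp_coe]
  convert tendsto_iff_tendstoUniformly.1 hUV using 1
  · rfl
  · exact funext (IccExtend_val hab V)

variable {E : Type*} [NormedAddCommGroup E] [NormedSpace ℝ E]

theorem exists_hasDerivWithinAt_Icc_of_lipschitzWith [CompleteSpace E] {g : E → E} {C M : ℝ≥0}
    (hg : LipschitzWith C g) (hgM : ∀ x, ‖g x‖ ≤ M) (x₀ : E) {a : ℝ} (ha : 0 ≤ a) :
    ∃ γ : ℝ → E, γ 0 = x₀ ∧ ∀ t ∈ Icc (-a) a, HasDerivWithinAt γ (g (γ t)) (Icc (-a) a) t := by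
  have hPL : IsPicardLindelof (fun _ => g) (tmin := -a) (tmax := a)
      ⟨0, by simp [ha]⟩ x₀ ⟨M * a, by positivity⟩ 0 M C :=
    .of_time_independent (fun x _ => hgM x) hg.lipschitzOnWith (by simp; rfl)
  exact hPL.exists_eq_forall_mem_Icc_hasDerivWithinAt₀

theorem exists_hasDerivAt_of_continuousOn [FiniteDimensional ℝ E] {f : E → E} {O : Set E}
    (hO : IsOpen O) {x₀ : E} (hx₀ : x₀ ∈ O) (hf : ContinuousOn f O) :
    ∃ ε > (0 : ℝ), ∃ γ : ℝ → E, γ 0 = x₀ ∧ ∀ t ∈ Ioo (-ε) ε, γ t ∈ O ∧ HasDerivAt γ (f (γ t)) t := by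
  obtain ⟨r, hr, hrO⟩ := nhds_basis_closedBall.mem_iff.1 (hO.mem_nhds hx₀)
  set K := closedBall x₀ r
  have hK : IsCompact K := isCompact_closedBall x₀ r
  obtain ⟨M, g, hgC, hgM, hgf⟩ := exists_lipschitzWith_tendstoUniformlyOn hK (hf.mono hrO)
  -- on `[-a, a]` the solutions of `x' = g k x` move at speed `≤ M`, so they stay in `K`
  set a := r / (M + 1)
  have ha : 0 < a := by positivity
  choose u hu₀ hu using fun k =>
    exists_hasDerivWithinAt_Icc_of_lipschitzWith (hgC k).choose_spec (hgM k) x₀ ha.le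
  have huM : ∀ k, LipschitzOnWith M (u k) (Icc (-a) a) := fun k =>
    (convex_Icc _ _).lipschitzOnWith_of_nnnorm_hasDerivWithin_le (hu k) fun t _ => hgM k _
  have h0 : (0 : ℝ) ∈ Icc (-a) a := ⟨by linarith, ha.le⟩
  have huK : ∀ k, MapsTo (u k) (Icc (-a) a) K := fun k t ht => by
    have hta : |t| ≤ a := abs_le.2 ht
    calc dist (u k t) x₀ = dist (u k t) (u k 0) := by rw [hu₀]
      _ ≤ M * dist t 0 := (huM k).dist_le_mul t ht 0 h0
      _ ≤ M * a := by rw [Real.dist_0_eq_abs]; gcongr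
      _ ≤ r := by
          rw [mul_div_assoc', div_le_iff₀ (by positivity)]
          nlinarith
  obtain ⟨γ, φ, hφ, huφ⟩ := exists_subseq_tendstoUniformlyOn_Icc hK (by linarith) huM huK
  have hγK : MapsTo γ (Icc (-a) a) K := fun t ht =>
    hK.isClosed.mem_of_tendsto (huφ.tendsto_at ht) (.of_forall fun k => huK (φ k) ht)
  have hγ₀ : γ 0 = x₀ := tendsto_nhds_unique (huφ.tendsto_at h0) (by simp [hu₀])
  have hderiv : TendstoUniformlyOn (fun k t => g (φ k) (u (φ k) t)) (fun t => f (γ t)) atTop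
      (Ioo (-a) a) :=
    TendstoUniformlyOn.comp_of_uniformContinuousOn
      (hK.uniformContinuousOn_of_continuous (hf.mono hrO))
      (fun W hW => hφ.tendsto_atTop.eventually (hgf W hW)) (huφ.mono Ioo_subset_Icc_self)
      (fun k => (huK (φ k)).mono_left Ioo_subset_Icc_self) (hγK.mono_left Ioo_subset_Icc_self)
  refine ⟨a, ha, γ, hγ₀, fun t ht => ⟨hrO (hγK (Ioo_subset_Icc_self ht)), ?_⟩⟩
  refine hasDerivAt_of_tendstoUniformlyOn isOpen_Ioo hderiv (.of_forall fun k s hs => ?_)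
    (fun s hs => huφ.tendsto_at (Ioo_subset_Icc_self hs)) ht
  exact (hu (φ k) s (Ioo_subset_Icc_self hs)).hasDerivAt (Icc_mem_nhds hs.1 hs.2)

end Peano

section Lagrangian

variable {n : ℕ}

theorem differentiableAt_energy {L : TP n → ℝ} {p : TP n} (hL : ContDiffAt ℝ 2 L p) :
    DifferentiableAt ℝ (energy L) p := by
  have hdL : DifferentiableAt ℝ (fderiv ℝ L) p :=
    (hL.fderiv_right (m := 1) (by norm_num)).differentiableAt (by norm_num)
  have hpdy : ∀ i, DifferentiableAt ℝ (pdy i L) p := fun i =>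
    hdL.clm_apply (differentiableAt_const _)
  refine DifferentiableAt.sub (.fun_sum fun i _ => ?_) (hL.differentiableAt (by norm_num))
  exact ((ContinuousLinearMap.proj i).comp (ContinuousLinearMap.snd ℝ _ _)).differentiableAt.mul
    (hpdy i)

@[simp]
theorem cartanForm_self (L : TP n → ℝ) (p w : TP n) : cartanForm L p w w = 0 := by
  simp [cartanForm]

theorem fderiv_energy_apply_eq_of_cartanForm {L : TP n → ℝ} {V : TP n → Fin n → ℝ} {p X : TP n}
    (hX : X.1 = p.2)
    (h : cartanForm L p X X = -fderiv ℝ (energy L) p X + ∑ i, forceForm L V p i * X.1 i) :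
    fderiv ℝ (energy L) p X = ∑ i, forceForm L V p i * p.2 i := by
  rw [cartanForm_self, hX] at h
  linarith

theorem velCurve_fst_eq {S : TP n → TP n} (hS : ∀ p, (S p).1 = p.2) {γ : ℝ → TP n} {t : ℝ}
    (hγ : HasDerivAt γ (S (γ t)) t) : velCurve (fun s => (γ s).1) t = γ t := by
  refine Prod.ext rfl (funext fun i => ?_)
  have hγi : HasDerivAt (fun s => (γ s).1 i) ((S (γ t)).1 i) t :=
    hasDerivAt_pi.1 (hasFDerivAt_fst.comp_hasDerivAt t hγ) i
  rw [hS] at hγi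
  exact hγi.deriv

theorem exists_velCurve_hasDerivAt_of_continuousOn {S : TP n → TP n} {U : Set (TP n)}
    (hU : IsOpen U) (hSU : ContinuousOn S U) (hS : ∀ p, (S p).1 = p.2) {p : TP n} (hp : p ∈ U) :
    ∃ ε > (0 : ℝ), ∃ c : ℝ → Fin n → ℝ, velCurve c 0 = p ∧
      ∀ t ∈ Ioo (-ε) ε, velCurve c t ∈ U ∧ HasDerivAt (velCurve c) (S (velCurve c t)) t := by
  obtain ⟨ε, hε, γ, hγ₀, hγ⟩ := exists_hasDerivAt_of_continuousOn hU hp hSU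
  have hlift : ∀ t ∈ Ioo (-ε) ε, velCurve (fun s => (γ s).1) t = γ t := fun t ht =>
    velCurve_fst_eq hS (hγ t ht).2
  refine ⟨ε, hε, fun s => (γ s).1, (hlift 0 ⟨by linarith, hε⟩).trans hγ₀, fun t ht => ?_⟩
  rw [hlift t ht]
  refine ⟨(hγ t ht).1, (hγ t ht).2.congr_of_eventuallyEq ?_⟩
  filter_upwards [isOpen_Ioo.mem_nhds ht] with s hs using hlift s hs

end Lagrangian

theorem stmt3_general {n : ℕ} (L : TP n → ℝ) (V : TP n → Fin n → ℝ) (S : TP n → TP n)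
    (hL : ContDiffOn ℝ (⊤ : ℕ∞) L {p : TP n | p.2 ≠ 0})
    (hScont : ContinuousOn S {p : TP n | p.2 ≠ 0})
    (hSspray : ∀ p : TP n, (S p).1 = p.2)
    (hS : ∀ p : TP n, p.2 ≠ 0 → ∀ w : TP n,
      cartanForm L p (S p) w = - fderiv ℝ (energy L) p w + ∑ i, forceForm L V p i * w.1 i) :
    (∀ p : TP n, p.2 ≠ 0 →
      fderiv ℝ (energy L) p (S p) = ∑ i, forceForm L V p i * p.2 i) ∧
    (∀ (a b : ℝ) (c : ℝ → Fin n → ℝ),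
      (∀ t ∈ Set.Ioo a b, (velCurve c t).2 ≠ 0 ∧ HasDerivAt (velCurve c) (S (velCurve c t)) t) →
      ∀ t ∈ Set.Ioo a b,
        HasDerivAt (fun s => energy L (velCurve c s))
          (∑ i, forceForm L V (velCurve c t) i * deriv (fun s => c s i) t) t) ∧
    ((∀ (a b : ℝ) (c : ℝ → Fin n → ℝ),
      (∀ t ∈ Set.Ioo a b, (velCurve c t).2 ≠ 0 ∧ HasDerivAt (velCurve c) (S (velCurve c t)) t) →
      AntitoneOn (fun s => energy L (velCurve c s)) (Set.Ioo a b)) ↔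
      (∀ p : TP n, p.2 ≠ 0 → ∑ i, forceForm L V p i * p.2 i ≤ 0)) := by
  have hU : IsOpen {p : TP n | p.2 ≠ 0} := isOpen_ne.preimage continuous_snd
  have hpower : ∀ p : TP n, p.2 ≠ 0 →
      fderiv ℝ (energy L) p (S p) = ∑ i, forceForm L V p i * p.2 i := fun p hp =>
    fderiv_energy_apply_eq_of_cartanForm (hSspray p) (hS p hp (S p))
  have hcurve : ∀ (a b : ℝ) (c : ℝ → Fin n → ℝ),
      (∀ t ∈ Ioo a b, (velCurve c t).2 ≠ 0 ∧ HasDerivAt (velCurve c) (S (velCurve c t)) t) →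
      ∀ t ∈ Ioo a b, HasDerivAt (fun s => energy L (velCurve c s))
        (∑ i, forceForm L V (velCurve c t) i * deriv (fun s => c s i) t) t := by
    intro a b c hc t ht
    obtain ⟨hne, hd⟩ := hc t ht
    have hE := differentiableAt_energy ((hL.contDiffAt (hU.mem_nhds hne)).of_le (by norm_cast))
    exact (hE.hasFDerivAt.comp_hasDerivAt t hd).congr_deriv (hpower _ hne)
  refine ⟨hpower, hcurve, fun hanti p hp => ?_, fun hdiss a b c hc => ?_⟩
  · obtain ⟨ε, hε, c, hc₀, hc⟩ := exists_velCurve_hasDerivAt_of_continuousOn hU hScont hSspray hp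
    have h0 : (0 : ℝ) ∈ Ioo (-ε) ε := ⟨by linarith, hε⟩
    have h := (hcurve _ _ c hc 0 h0).hasDerivWithinAt.nonpos_of_antitoneOn
      (isOpen_Ioo.preperfect 0 h0) (hanti _ _ c hc)
    change ∑ i, forceForm L V (velCurve c 0) i * (velCurve c 0).2 i ≤ 0 at h
    rwa [hc₀] at h
  · refine antitoneOn_of_hasDerivWithinAt_nonpos (convex_Ioo a b)
      (f' := fun t => ∑ i, forceForm L V (velCurve c t) i * deriv (fun s => c s i) t)
      (fun t ht => (hcurve a b c hc t ht).continuousAt.continuousWithinAt) ?_ ?_ <;>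
      rw [interior_Ioo]
    · exact fun t ht => (hcurve a b c hc t ht).hasDerivWithinAt
    · exact fun t ht => hdiss _ (hc t ht).1

/-- for the evolution semispray `S` (with `i_S ω_L = −dE_L + σ`):
`S(E_L) = σ(S) = σ_i y^i`; along any integral curve of `S` the energy satisfies
`d/dt E_L = σ_i(x, dx/dt) dx^i/dt`; and the energy is non-increasing along all
evolution curves iff `σ_i y^i ≤ 0` everywhere (the force field is dissipative). -/
theorem stmt3 {n : ℕ} (L : TP n → ℝ) (V : TP n → Fin n → ℝ) (S : TP n → TP n)
    (hL : ContDiffOn ℝ (⊤ : ℕ∞) L {p : TP n | p.2 ≠ 0})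
    (hreg : ∀ p : TP n, p.2 ≠ 0 →
      IsUnit (Matrix.of fun i j : Fin n => metricT L p i j))
    (hScont : ContinuousOn S {p : TP n | p.2 ≠ 0})
    (hSspray : ∀ p : TP n, (S p).1 = p.2)
    (hS : ∀ p : TP n, p.2 ≠ 0 → ∀ w : TP n,
      cartanForm L p (S p) w = - fderiv ℝ (energy L) p w + ∑ i, forceForm L V p i * w.1 i) :
    (∀ p : TP n, p.2 ≠ 0 →
      fderiv ℝ (energy L) p (S p) = ∑ i, forceForm L V p i * p.2 i) ∧
    (∀ (a b : ℝ) (c : ℝ → Fin n → ℝ),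
      (∀ t ∈ Set.Ioo a b, (velCurve c t).2 ≠ 0 ∧ HasDerivAt (velCurve c) (S (velCurve c t)) t) →
      ∀ t ∈ Set.Ioo a b,
        HasDerivAt (fun s => energy L (velCurve c s))
          (∑ i, forceForm L V (velCurve c t) i * deriv (fun s => c s i) t) t) ∧
    ((∀ (a b : ℝ) (c : ℝ → Fin n → ℝ),
      (∀ t ∈ Set.Ioo a b, (velCurve c t).2 ≠ 0 ∧ HasDerivAt (velCurve c) (S (velCurve c t)) t) →
      AntitoneOn (fun s => energy L (velCurve c s)) (Set.Ioo a b)) ↔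
      (∀ p : TP n, p.2 ≠ 0 → ∑ i, forceForm L V p i * p.2 i ≤ 0)) :=
  stmt3_general L V S hL hScont hSspray hS
end

section
/- For a Lagrangian mechanical system with metric tensor g_{ij}, suppose the canonical nonlinear connection N₀ is metric for the canonical semispray S₀ (i.e. S₀(g_{ij}) − g_{im}N₀^m_j − g_{mj}N₀^m_i = 0) and the Cartan tensor C_{ijk} = (1/2)∂g_{ij}/∂y^k is totally symmetric. Then the dynamical covariant derivative of g with respect to the evolution pair (S, N), where S = S₀ + (1/2)V^k∂/∂y^k and N^i_j = N₀^i_j − (1/4)∂V^i/∂y^j, equals g_{ij|} = (1/4)(∂σ_i/∂y^j + ∂σ_j/∂y^i), with σ_i = g_{ij}V^j. Consequently, the evolution nonlinear connection is metric (g_{ij|} = 0) if and only if the (0,2)-tensor ∂σ_i/∂y^j is skew-symmetric in i,j. -/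
/-- The dynamical covariant derivative `g_{ij|} = S(g_{ij}) − g_{im}N^m_j − g_{mj}N^m_i`
of the metric tensor with respect to a pair (semispray `S`, connection `N`). -/
noncomputable def dynCov {n : ℕ} (g : TP n → Fin n → Fin n → ℝ)
    (S : TP n → TP n) (N : TP n → Fin n → Fin n → ℝ) (p : TP n) (i j : Fin n) : ℝ :=
  fderiv ℝ (fun q => g q i j) p (S p)
    - (∑ m, g p i m * N p m j) - ∑ m, g p m j * N p m i

section Vertical

variable {n : ℕ}

theorem fderiv_apply_zero_prod_eq_sum_pdy (f : TP n → ℝ) (p : TP n) (v : Fin n → ℝ) :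
    fderiv ℝ f p ((0 : Fin n → ℝ), v) = ∑ k, v k * pdy k f p := by
  have hv : (((0 : Fin n → ℝ), v) : TP n)
      = ∑ k, v k • (((0 : Fin n → ℝ), Pi.single k 1) : TP n) := by
    refine Prod.ext ?_ ?_
    · simp [Prod.fst_sum]
    · funext l
      simp [Prod.snd_sum, Finset.sum_apply, Pi.single_apply]
  rw [hv, map_sum]
  simp only [map_smul, smul_eq_mul, pdy]

theorem pdy_mul {f h : TP n → ℝ} {p : TP n} (hf : DifferentiableAt ℝ f p)
    (hh : DifferentiableAt ℝ h p) (i : Fin n) :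
    pdy i (fun q => f q * h q) p = f p * pdy i h p + h p * pdy i f p := by
  simp only [pdy, fderiv_fun_mul hf hh, add_apply, smul_apply, smul_eq_mul]

theorem pdy_sum {f : Fin n → TP n → ℝ} {p : TP n} (hf : ∀ k, DifferentiableAt ℝ (f k) p)
    (i : Fin n) :
    pdy i (fun q => ∑ k, f k q) p = ∑ k, pdy i (f k) p := by
  simp only [pdy, fderiv_fun_sum fun k _ => hf k, sum_apply]

end Vertical

section Evolution

variable {n : ℕ} (g : TP n → Fin n → Fin n → ℝ)

theorem dynCov_add_sub (S W : TP n → TP n) (N M : TP n → Fin n → Fin n → ℝ) (p : TP n)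
    (i j : Fin n) :
    dynCov g (fun p => S p + W p) (fun p i j => N p i j - M p i j) p i j
      = dynCov g S N p i j + fderiv ℝ (fun q => g q i j) p (W p)
        + ∑ m, g p i m * M p m j + ∑ m, g p m j * M p m i := by
  simp only [dynCov, map_add, mul_sub, Finset.sum_sub_distrib]
  ring

theorem pdy_lowerIndex {V : TP n → Fin n → ℝ} {p : TP n}
    (hg : ∀ i j, DifferentiableAt ℝ (fun q => g q i j) p)
    (hV : ∀ i, DifferentiableAt ℝ (fun q => V q i) p)
    (hCartan : ∀ i j k, pdy k (fun q => g q i j) p = pdy j (fun q => g q i k) p) (i j : Fin n) :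
    pdy j (fun q => ∑ k, g q i k * V q k) p
      = ∑ k, g p i k * pdy j (fun q => V q k) p + ∑ k, V p k * pdy k (fun q => g q i j) p := by
  rw [pdy_sum (f := fun k q => g q i k * V q k) fun k => (hg i k).mul (hV k),
    ← Finset.sum_add_distrib]
  refine Finset.sum_congr rfl fun k _ => ?_
  rw [pdy_mul (hg i k) (hV k), hCartan]

theorem dynCov_evolution (S₀ : TP n → TP n) (N₀ : TP n → Fin n → Fin n → ℝ)
    (V : TP n → Fin n → ℝ) {p : TP n}
    (hg : ∀ i j, DifferentiableAt ℝ (fun q => g q i j) p)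
    (hV : ∀ i, DifferentiableAt ℝ (fun q => V q i) p)
    (hgsym : ∀ q i j, g q i j = g q j i)
    (hCartan : ∀ i j k, pdy k (fun q => g q i j) p = pdy j (fun q => g q i k) p) (i j : Fin n) :
    dynCov g (fun p => S₀ p + (1/2 : ℝ) • (((0 : Fin n → ℝ), V p) : TP n))
        (fun p i j => N₀ p i j - (1/4) * pdy j (fun q => V q i) p) p i j
      = dynCov g S₀ N₀ p i j
        + (1/4) * (pdy j (fun q => ∑ k, g q i k * V q k) p
          + pdy i (fun q => ∑ k, g q j k * V q k) p) := by
  have hgji : (fun q => g q j i) = fun q => g q i j := funext fun q => hgsym q j i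
  rw [dynCov_add_sub, map_smul, fderiv_apply_zero_prod_eq_sum_pdy,
    pdy_lowerIndex g hg hV hCartan, pdy_lowerIndex g hg hV hCartan, hgji]
  simp only [hgsym p _ j, smul_eq_mul, mul_left_comm _ (1/4 : ℝ), ← Finset.mul_sum]
  ring

end Evolution

/-- if the canonical nonlinear connection `N₀` is metric for the canonical
semispray `S₀` and the Cartan tensor is totally symmetric, then for the evolution pair
`S = S₀ + (1/2)V`, `N^i_j = N₀^i_j − (1/4)∂V^i/∂y^j`, one has
`g_{ij|} = (1/4)(∂σ_i/∂y^j + ∂σ_j/∂y^i)` with `σ_i = g_{ij}V^j`; hence the evolution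
connection is metric iff `∂σ_i/∂y^j` is skew-symmetric in `i,j`. -/
theorem stmt5 {n : ℕ} (g : TP n → Fin n → Fin n → ℝ)
    (S₀ : TP n → TP n) (N₀ : TP n → Fin n → Fin n → ℝ) (V : TP n → Fin n → ℝ)
    (hg : ∀ i j, ContDiff ℝ (⊤ : ℕ∞) (fun p => g p i j))
    (hV : ∀ i, ContDiff ℝ (⊤ : ℕ∞) (fun p => V p i))
    (hgsym : ∀ p i j, g p i j = g p j i)
    (hCartan : ∀ (p : TP n) (i j k : Fin n),
      pdy k (fun q => g q i j) p = pdy j (fun q => g q i k) p)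
    (hmetric : ∀ (p : TP n) (i j : Fin n), dynCov g S₀ N₀ p i j = 0) :
    (∀ (p : TP n) (i j : Fin n),
      dynCov g (fun p => S₀ p + (1/2 : ℝ) • (((0 : Fin n → ℝ), V p) : TP n))
        (fun p i j => N₀ p i j - (1/4) * pdy j (fun q => V q i) p) p i j =
      (1/4) * (pdy j (fun q => ∑ k, g q i k * V q k) p
             + pdy i (fun q => ∑ k, g q j k * V q k) p)) ∧
    ((∀ (p : TP n) (i j : Fin n),
      dynCov g (fun p => S₀ p + (1/2 : ℝ) • (((0 : Fin n → ℝ), V p) : TP n))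
        (fun p i j => N₀ p i j - (1/4) * pdy j (fun q => V q i) p) p i j = 0) ↔
     (∀ (p : TP n) (i j : Fin n),
      pdy j (fun q => ∑ k, g q i k * V q k) p
        = - pdy i (fun q => ∑ k, g q j k * V q k) p)) := by
  have hdynCov : ∀ p i j,
      dynCov g (fun p => S₀ p + (1/2 : ℝ) • (((0 : Fin n → ℝ), V p) : TP n))
        (fun p i j => N₀ p i j - (1/4) * pdy j (fun q => V q i) p) p i j =
      (1/4) * (pdy j (fun q => ∑ k, g q i k * V q k) p
             + pdy i (fun q => ∑ k, g q j k * V q k) p) := fun p i j => by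
    rw [dynCov_evolution g S₀ N₀ V (fun a b => (hg a b).differentiable (by simp) p)
      (fun a => (hV a).differentiable (by simp) p) hgsym (hCartan p), hmetric, zero_add]
  refine ⟨hdynCov, forall_congr' fun p => forall₂_congr fun i j => ?_⟩
  rw [hdynCov]
  constructor <;> intro h <;> linarith
end

section
/- For the Liouville mechanical system with V = e·C, the dynamical covariant derivative of the metric tensor with respect to the evolution pair (S,N) is g_{ij|} = (e/2)(2C_{ijk}y^k + g_{ij}). Consequently, the evolution nonlinear connection is metric (g_{ij|} = 0) if and only if the metric tensor g_{ij} is positively homogeneous of degree −1 in y, i.e. (∂g_{ij}/∂y^k) y^k = −g_{ij}. -/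
/-- for the Liouville mechanical system `V = e·C`, the dynamical
covariant derivative of the metric with respect to the evolution pair `(S, N)`
(`S = S₀ + (e/2)C`, `N^i_j = N₀^i_j − (1/4)∂V^i/∂y^j`) is
`g_{ij|} = (e/2)(2C_{ijk}y^k + g_{ij})`; consequently the evolution connection is
metric iff `g` is positively homogeneous of degree −1, i.e. `(∂g_{ij}/∂y^k)y^k = −g_{ij}`. -/
theorem stmt15 {n : ℕ} (L : TP n → ℝ) (e : ℝ) (he : e ≠ 0)
    (S₀ : TP n → TP n) (N₀ : TP n → Fin n → Fin n → ℝ)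
    (hL : ContDiffOn ℝ (⊤ : ℕ∞) L {p : TP n | p.2 ≠ 0})
    (hmetric : ∀ p : TP n, p.2 ≠ 0 → ∀ i j : Fin n, dynCov (metricT L) S₀ N₀ p i j = 0) :
    (∀ p : TP n, p.2 ≠ 0 → ∀ i j : Fin n,
      dynCov (metricT L)
        (fun q => S₀ q + (1/2 : ℝ) • (((0 : Fin n → ℝ), fun k => e * q.2 k) : TP n))
        (fun q i j => N₀ q i j - (1/4) * pdy j (fun r => e * r.2 i) q) p i j =
      (e/2) * (2 * (∑ k, ((1/2) * pdy k (fun q => metricT L q i j) p) * p.2 k)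
                + metricT L p i j)) ∧
    ((∀ p : TP n, p.2 ≠ 0 → ∀ i j : Fin n,
      dynCov (metricT L)
        (fun q => S₀ q + (1/2 : ℝ) • (((0 : Fin n → ℝ), fun k => e * q.2 k) : TP n))
        (fun q i j => N₀ q i j - (1/4) * pdy j (fun r => e * r.2 i) q) p i j = 0) ↔
     (∀ p : TP n, p.2 ≠ 0 → ∀ i j : Fin n,
      (∑ k, pdy k (fun q => metricT L q i j) p * p.2 k) = - metricT L p i j)) := by

  have key : ∀ p : TP n, p.2 ≠ 0 → ∀ i j : Fin n,
      dynCov (metricT L)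
        (fun q => S₀ q + (1/2 : ℝ) • (((0 : Fin n → ℝ), fun k => e * q.2 k) : TP n))
        (fun q i j => N₀ q i j - (1/4) * pdy j (fun r => e * r.2 i) q) p i j =
      (e/2) * ((∑ k, pdy k (fun q => metricT L q i j) p * p.2 k) + metricT L p i j) := by
    intro p hp i j
    have hm := hmetric p hp i j
    unfold dynCov at hm ⊢
    have hpdy : ∀ (q : TP n) (a b : Fin n), pdy b (fun r => e * r.2 a) q
        = e * (if a = b then 1 else 0) := by
      intro q a b
      have hc : HasFDerivAt (fun r : TP n => e * r.2 a)
          (e • ((ContinuousLinearMap.proj a).comp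
            (ContinuousLinearMap.snd ℝ (Fin n → ℝ) (Fin n → ℝ)))) q :=
        (((ContinuousLinearMap.proj a).comp
            (ContinuousLinearMap.snd ℝ (Fin n → ℝ) (Fin n → ℝ))).hasFDerivAt).const_mul e
      simp [pdy, hc.fderiv, Pi.single_apply]
    have hvec : (((0 : Fin n → ℝ), fun k => e * p.2 k) : TP n)
        = ∑ k, (e * p.2 k) • (((0 : Fin n → ℝ), Pi.single k 1) : TP n) := by
      apply Prod.ext
      · simp [Prod.fst_sum]
      · funext m
        simp [Prod.snd_sum, Finset.sum_apply, Pi.single_apply]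
    have hD' : fderiv ℝ (fun q => metricT L q i j) p
        (((0 : Fin n → ℝ), fun k => e * p.2 k) : TP n)
        = ∑ k, (e * p.2 k) * pdy k (fun q => metricT L q i j) p := by
      rw [hvec, map_sum]
      apply Finset.sum_congr rfl
      intro k _
      rw [map_smul]
      simp [pdy]
    have hD : fderiv ℝ (fun q => metricT L q i j) p
        (S₀ p + (1/2 : ℝ) • (((0 : Fin n → ℝ), fun k => e * p.2 k) : TP n))
        = fderiv ℝ (fun q => metricT L q i j) p (S₀ p)
          + (1/2) * ∑ k, (e * p.2 k) * pdy k (fun q => metricT L q i j) p := by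
      rw [map_add, map_smul, hD', smul_eq_mul]
    rw [hD]
    simp only [hpdy]
    have h1 : ∑ m, metricT L p i m * (N₀ p m j - 1/4 * (e * (if m = j then 1 else 0)))
        = (∑ m, metricT L p i m * N₀ p m j) - 1/4 * e * metricT L p i j := by
      simp only [mul_sub, Finset.sum_sub_distrib]
      congr 1
      simp [mul_ite, Finset.sum_ite_eq']
      ring
    have h2 : ∑ m, metricT L p m j * (N₀ p m i - 1/4 * (e * (if m = i then 1 else 0)))
        = (∑ m, metricT L p m j * N₀ p m i) - 1/4 * e * metricT L p i j := by
      simp only [mul_sub, Finset.sum_sub_distrib]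
      congr 1
      simp [mul_ite, Finset.sum_ite_eq']
      ring
    rw [h1, h2]
    have hsum : ∑ k, (e * p.2 k) * pdy k (fun q => metricT L q i j) p
        = e * ∑ k, pdy k (fun q => metricT L q i j) p * p.2 k := by
      rw [Finset.mul_sum]
      apply Finset.sum_congr rfl
      intro k _
      ring
    rw [hsum]
    linarith [hm]
  constructor
  · intro p hp i j
    rw [key p hp i j]
    have : (2:ℝ) * (∑ k, ((1/2) * pdy k (fun q => metricT L q i j) p) * p.2 k)
        = ∑ k, pdy k (fun q => metricT L q i j) p * p.2 k := by
      rw [Finset.mul_sum]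
      apply Finset.sum_congr rfl
      intro k _
      ring
    rw [this]
  · constructor
    · intro h p hp i j
      have h0 := h p hp i j
      rw [key p hp i j] at h0
      have he2 : e / 2 ≠ 0 := by positivity
      have := mul_eq_zero.mp h0
      rcases this with h' | h'
      · exact absurd h' he2
      · linarith
    · intro h p hp i j
      rw [key p hp i j, h p hp i j]
      ring
end
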